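/- arXiv:2309.01562 — 6 statements merged into one kernel-verified Lean document; each statement's English description precedes it below -/
import Mathlib

section
/- For α < 0 and z < 0, the rational function R(z) = (-(α+2)z² - (2α²+2)z - 2α) / ((2α²-2α)z² + (-2α²+2α-2)z - 2α) satisfies R'(z) > 0, i.e. R is strictly monotonically increasing on (-∞, 0). -/
/-! Write `R = N / D` with quadratics `N` and `D`. The denominator factors as
`D z = 2 (α z + 1) (α z - α - z)`, and the numerator `N' D - N D'` of `R'` is twice the
quadratic in the displayed formula for `R'`; after the substitution `α = -a`, `z = -w` both become polynomials in `a, w > 0`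
with positive coefficients, so `R' > 0` on `(-∞, 0)`. -/

theorem hasDerivAt_quadratic_div_quadratic {𝕜 : Type*} [NontriviallyNormedField 𝕜]
    (a b c d e f z : 𝕜) (hz : d * z ^ 2 + e * z + f ≠ 0) :
    HasDerivAt (fun x => (a * x ^ 2 + b * x + c) / (d * x ^ 2 + e * x + f))
      (((a * e - b * d) * z ^ 2 + 2 * (a * f - c * d) * z + (b * f - c * e)) /
        (d * z ^ 2 + e * z + f) ^ 2) z := by
  have hquad (p q r : 𝕜) :
      HasDerivAt (fun x => p * x ^ 2 + q * x + r) (2 * p * z + q) z := by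
    simpa [mul_comm, mul_left_comm] using
      (((hasDerivAt_pow 2 z).const_mul p).add ((hasDerivAt_id z).const_mul q)).add_const r
  exact ((hquad a b c).fun_div (hquad d e f) hz).congr_deriv (by ring)

section MPRK22

variable {α z : ℝ}

theorem mprk22_denom_pos (hα : α < 0) (hz : z < 0) :
    0 < (2 * α ^ 2 - 2 * α) * z ^ 2 + (-2 * α ^ 2 + 2 * α - 2) * z - 2 * α := by
  have hαz : 0 < α * z := mul_pos_of_neg_of_neg hα hz
  have hfactor₁ : 0 < α * z + 1 := by linarith
  have hfactor₂ : 0 < α * z - α - z := by linarith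
  calc (0 : ℝ) < 2 * ((α * z + 1) * (α * z - α - z)) := by positivity
    _ = _ := by ring

theorem mprk22_deriv_num_pos (hα : α < 0) (hz : z < 0) :
    0 < 2 * α ^ 4 * z ^ 2 - α ^ 3 * z ^ 2 + 4 * α ^ 3 * z + 3 * α ^ 2 * z ^ 2 - 2 * α ^ 2 * z
      - 3 * α * z ^ 2 + 2 * α ^ 2 + 4 * α * z + 2 * z ^ 2 := by
  obtain ⟨a, ha, rfl⟩ : ∃ a : ℝ, 0 < a ∧ α = -a := ⟨-α, by linarith, by ring⟩
  obtain ⟨w, hw, rfl⟩ : ∃ w : ℝ, 0 < w ∧ z = -w := ⟨-z, by linarith, by ring⟩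
  calc (0 : ℝ) < 2 * a ^ 4 * w ^ 2 + a ^ 3 * w ^ 2 + 4 * a ^ 3 * w + 3 * a ^ 2 * w ^ 2
        + 2 * a ^ 2 * w + 3 * a * w ^ 2 + 2 * a ^ 2 + 4 * a * w + 2 * w ^ 2 := by positivity
    _ = _ := by ring

end MPRK22

theorem mprk22_neg_alpha_R_strict_mono (α : ℝ) (hα : α < 0)
    (R : ℝ → ℝ)
    (hR : ∀ z, R z = (-(α+2)*z^2 - (2*α^2+2)*z - 2*α) /
      ((2*α^2-2*α)*z^2 + (-2*α^2+2*α-2)*z - 2*α)) :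
    (∀ z < 0, 0 < deriv R z) ∧ StrictMonoOn R (Set.Iio 0) := by
  have hR' : R = fun x => (-(α + 2) * x ^ 2 + -(2 * α ^ 2 + 2) * x + -(2 * α)) /
      ((2 * α ^ 2 - 2 * α) * x ^ 2 + (-2 * α ^ 2 + 2 * α - 2) * x + -(2 * α)) := by
    funext x
    rw [hR]
    ring
  have hderiv_pos : ∀ z < 0, ∃ r, HasDerivAt R r z ∧ 0 < r := fun z hz => by
    have hD := mprk22_denom_pos hα hz
    refine ⟨_, hR' ▸ hasDerivAt_quadratic_div_quadratic _ _ _ _ _ _ z (by linarith), ?_⟩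
    have hnum := mprk22_deriv_num_pos hα hz
    apply div_pos
    · linear_combination 2 * hnum
    · exact pow_pos (by linarith) 2
  choose r hr hr_pos using hderiv_pos
  have hderiv : ∀ z < 0, 0 < deriv R z := fun z hz => (hr z hz).deriv ▸ hr_pos z hz
  refine ⟨hderiv, strictMonoOn_of_deriv_pos (convex_Iio 0)
    (fun z hz => (hr z hz).continuousAt.continuousWithinAt) fun z hz => ?_⟩
  exact hderiv z (by rwa [interior_Iio] at hz)
end

section
/- For α < 0 and all z < 0, the function R(z) = (-(α+2)z² - (2α²+2)z - 2α) / ((2α²-2α)z² + (-2α²+2α-2)z - 2α) satisfies -(α+2)/(2α(α-1)) < R(z) < 1. -/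
/-!
Write `R = N / D`. For `α < 0` and `z < 0` every monomial of `D` is positive, so both bounds
can be cross-multiplied. Then `D - N = z ((2α² - α + 2) z + 2α)` is a product of two negative
factors, and in `2α(α - 1) N + (α + 2) D` the `z²` terms cancel, leaving an affine function of `z`
whose coefficients have signs making it positive on `z < 0`.
-/

namespace MPRK22

def stabNum (α z : ℝ) : ℝ := -(α+2)*z^2 - (2*α^2+2)*z - 2*α

def stabDen (α z : ℝ) : ℝ := (2*α^2-2*α)*z^2 + (-2*α^2+2*α-2)*z - 2*α

variable {α z : ℝ}

lemma stabDen_pos (hα : α ≤ 0) (hz : z < 0) : 0 < stabDen α z := by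
  have h₁ : 0 ≤ (2*α^2-2*α)*z^2 := by
    have : 0 ≤ 2*α^2-2*α := by nlinarith
    positivity
  have h₂ : 0 < (-2*α^2+2*α-2)*z := mul_pos_of_neg_of_neg (by nlinarith) hz
  unfold stabDen
  linarith

lemma stabDen_sub_stabNum (α z : ℝ) :
    stabDen α z - stabNum α z = z * ((2*α^2-α+2)*z + 2*α) := by
  unfold stabDen stabNum; ring

lemma stabNum_lt_stabDen (hα : α ≤ 0) (hz : z < 0) : stabNum α z < stabDen α z := by
  have : 0 < z * ((2*α^2-α+2)*z + 2*α) :=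
    mul_pos_of_neg_of_neg hz (by nlinarith [mul_pos_of_neg_of_neg hz hz])
  linarith [stabDen_sub_stabNum α z]

lemma mul_stabNum_add_mul_stabDen (α z : ℝ) :
    2*α*(α-1) * stabNum α z + (α+2) * stabDen α z
      = -2*(2*α^4 - α^3 + 3*α^2 - 3*α + 2) * z - 2*α*(2*α^2-α+2) := by
  unfold stabDen stabNum; ring

lemma neg_mul_stabDen_lt (hα : α ≤ 0) (hz : z < 0) :
    -(α+2) * stabDen α z < 2*α*(α-1) * stabNum α z := by
  have hz_term : 0 < -2*(2*α^4 - α^3 + 3*α^2 - 3*α + 2) * z :=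
    mul_pos_of_neg_of_neg (by nlinarith [pow_two_nonneg (α^2), pow_two_nonneg α]) hz
  have hconst : 0 ≤ -2*α*(2*α^2-α+2) := mul_nonneg (by linarith) (by nlinarith)
  linarith [mul_stabNum_add_mul_stabDen α z]

lemma stabNum_div_stabDen_lt_one (hα : α ≤ 0) (hz : z < 0) :
    stabNum α z / stabDen α z < 1 :=
  (div_lt_one (stabDen_pos hα hz)).2 (stabNum_lt_stabDen hα hz)

lemma lt_stabNum_div_stabDen (hα : α < 0) (hz : z < 0) :
    -(α+2)/(2*α*(α-1)) < stabNum α z / stabDen α z := by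
  have hc : 0 < 2*α*(α-1) := by nlinarith
  rw [div_lt_div_iff₀ hc (stabDen_pos hα.le hz)]
  linarith [neg_mul_stabDen_lt hα.le hz]

end MPRK22

theorem mprk22_neg_alpha_R_bounds (α : ℝ) (hα : α < 0)
    (R : ℝ → ℝ)
    (hR : ∀ z, R z = (-(α+2)*z^2 - (2*α^2+2)*z - 2*α) /
      ((2*α^2-2*α)*z^2 + (-2*α^2+2*α-2)*z - 2*α)) :
    ∀ z < 0, -(α+2)/(2*α*(α-1)) < R z ∧ R z < 1 := by
  intro z hz
  rw [hR]
  exact ⟨MPRK22.lt_stabNum_div_stabDen hα hz, MPRK22.stabNum_div_stabDen_lt_one hα.le hz⟩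
end

section
/- For every α with α ≤ -1/2 and every z < 0, the function R(z) = (-(α+2)z² - (2α²+2)z - 2α) / ((2α²-2α)z² + (-2α²+2α-2)z - 2α) satisfies |R(z)| < 1. -/
/-!
Put `w = -z > 0`. For `α ≤ -1/2` the denominator `D` of `R` is a quadratic in `w` with positive
coefficients, hence positive, so `|R z| < 1` amounts to `-D < N < D` for the numerator `N`.
Both margins are again visibly positive in `w`:
`D + N = (2α + 1)(α - 2) w² + (4α² - 2α + 4) w - 4α` and `D - N = w ((2α² - α + 2) w - 2α)`.
-/

namespace MPRK22

def num (α z : ℝ) : ℝ := -(α + 2) * z ^ 2 - (2 * α ^ 2 + 2) * z - 2 * α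

def den (α z : ℝ) : ℝ := (2 * α ^ 2 - 2 * α) * z ^ 2 + (-2 * α ^ 2 + 2 * α - 2) * z - 2 * α

variable {α z : ℝ}

theorem den_pos (hα : α ≤ -(1 / 2)) (hz : z < 0) : 0 < den α z := by
  have hquad : 0 ≤ (2 * α ^ 2 - 2 * α) * z ^ 2 := mul_nonneg (by nlinarith) (sq_nonneg z)
  have hlin : 0 < (-2 * α ^ 2 + 2 * α - 2) * z := mul_pos_of_neg_of_neg (by nlinarith) hz
  unfold den
  linarith

theorem neg_den_lt_num (hα : α ≤ -(1 / 2)) (hz : z < 0) : -den α z < num α z := by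
  have hsum : den α z + num α z =
      (2 * α + 1) * (α - 2) * z ^ 2 + (4 * α ^ 2 - 2 * α + 4) * -z - 4 * α := by
    unfold den num
    ring
  have hquad : 0 ≤ (2 * α + 1) * (α - 2) * z ^ 2 :=
    mul_nonneg (mul_nonneg_of_nonpos_of_nonpos (by linarith) (by linarith)) (sq_nonneg z)
  have hlin : 0 < (4 * α ^ 2 - 2 * α + 4) * -z := mul_pos (by nlinarith) (neg_pos.mpr hz)
  linarith

theorem num_lt_den (hα : α ≤ -(1 / 2)) (hz : z < 0) : num α z < den α z := by
  have hdiff : den α z - num α z = z * ((2 * α ^ 2 - α + 2) * z + 2 * α) := by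
    unfold den num
    ring
  have hfactor : (2 * α ^ 2 - α + 2) * z + 2 * α < 0 := by
    have : (2 * α ^ 2 - α + 2) * z < 0 := mul_neg_of_pos_of_neg (by nlinarith) hz
    linarith
  linarith [mul_pos_of_neg_of_neg hz hfactor]

theorem abs_num_div_den_lt_one (hα : α ≤ -(1 / 2)) (hz : z < 0) : |num α z / den α z| < 1 := by
  have hD := den_pos hα hz
  rw [abs_div, abs_of_pos hD, div_lt_one hD, abs_lt]
  exact ⟨neg_den_lt_num hα hz, num_lt_den hα hz⟩

end MPRK22

theorem mprk22_alpha_le_neg_half_abs_R_lt_one (α : ℝ) (hα : α ≤ -(1/2))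
    (R : ℝ → ℝ)
    (hR : ∀ z, R z = (-(α+2)*z^2 - (2*α^2+2)*z - 2*α) /
      ((2*α^2-2*α)*z^2 + (-2*α^2+2*α-2)*z - 2*α)) :
    ∀ z < 0, |R z| < 1 := by
  intro z hz
  rw [hR z]
  exact MPRK22.abs_num_div_den_lt_one hα hz
end

section
/- For every complex number z with Re(z) < 0 and every real α ≥ 1/2, the stability function R(z) = (-z² - 2αz + 2) / (2(1 - αz)(1 - z)) satisfies |R(z)| < 1. -/
/-!
Writing `R = N / D`, the difference `|D|² - |N|²` is an explicit polynomial in `x = Re z` and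
`r = |z|²` whose four terms `-8x`, `8(2α+1)x²`, `-4α(2α+3)rx` and `(4α²-1)r²` are all
nonnegative when `x < 0` and `α ≥ 1/2`, the first one strictly. Hence `|N| < |D|`, which also
shows that `D ≠ 0`.
-/

open Complex

theorem normSq_sub_normSq_mprk22 (α : ℝ) (z : ℂ) :
    normSq (2 * (1 - α * z) * (1 - z)) - normSq (-z ^ 2 - 2 * α * z + 2) =
      -8 * z.re + 8 * (2 * α + 1) * z.re ^ 2 - 4 * α * (2 * α + 3) * normSq z * z.re
        + (4 * α ^ 2 - 1) * normSq z ^ 2 := by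
  simp only [normSq_apply, sub_re, sub_im, add_re, add_im, mul_re, mul_im, ofReal_re, ofReal_im,
    one_re, one_im, neg_re, neg_im, re_ofNat, im_ofNat, pow_two]
  ring

theorem mprk22_margin_pos {α x r : ℝ} (hα : 1 / 2 ≤ α) (hx : x < 0) (hr : 0 ≤ r) :
    0 < -8 * x + 8 * (2 * α + 1) * x ^ 2 - 4 * α * (2 * α + 3) * r * x
        + (4 * α ^ 2 - 1) * r ^ 2 := by
  have hα₀ : 0 ≤ α := by linarith
  have hx₀ : 0 ≤ -x := by linarith
  have hsq : 0 ≤ 8 * (2 * α + 1) * x ^ 2 := by positivity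
  have hmixed : 0 ≤ 4 * α * (2 * α + 3) * r * -x := by positivity
  have hquartic : 0 ≤ (4 * α ^ 2 - 1) * r ^ 2 := by
    have : 0 ≤ 4 * α ^ 2 - 1 := by nlinarith
    positivity
  linarith

theorem norm_div_lt_one_of_norm_lt {𝕜 : Type*} [NormedDivisionRing 𝕜] {a b : 𝕜}
    (h : ‖a‖ < ‖b‖) : ‖a / b‖ < 1 := by
  rw [norm_div, div_lt_one ((norm_nonneg a).trans_lt h)]
  exact h

theorem mprk22_A_stability (α : ℝ) (hα : 1/2 ≤ α) (z : ℂ) (hz : z.re < 0) :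
    ‖(-z^2 - 2*(α:ℂ)*z + 2) / (2*(1 - (α:ℂ)*z)*(1 - z))‖ < 1 := by
  apply norm_div_lt_one_of_norm_lt
  rw [← sq_lt_sq₀ (norm_nonneg _) (norm_nonneg _), Complex.sq_norm, Complex.sq_norm, ← sub_pos,
    normSq_sub_normSq_mprk22]
  exact mprk22_margin_pos hα hz (normSq_nonneg z)
end

section
/- For real α with 0 < α < 1/2, let z* = (-2α² + 3α - 2 - √(4α⁴ + 12α³ - 11α² - 4α + 4)) / (6α² - 7α + 2). Then z* < 0 and the stability function R(z) = -(1 + (2 - 5/(2α) + 1/α²)z - (3/(2α) - 1/α²)·z/(-1 + αz)) / (-1 + (-1 + 1/α)z) satisfies |R(z*)| ≥ 1; in particular R(z*) = -1. -/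
/-!
Clearing denominators, `R z = -1` is equivalent (away from the poles `z = 1/α` and
`z = α/(1-α)`) to the quadratic equation
`(6α² - 7α + 2) z² + 2 (2α² - 3α + 2) z - 4α = 0`, and `z*` is its root with the minus sign in
front of the square root. For `0 < α < 1/2` the leading coefficient `(2α - 1)(3α - 2)` and the
linear coefficient are positive, so `z* < 0`, which keeps `z*` away from both (positive) poles.
-/

open Real

noncomputable def mprk22Stability (α z : ℝ) : ℝ :=
  -(1 + (2 - 5/(2*α) + 1/α^2)*z - (3/(2*α) - 1/α^2) * (z/(-1 + α*z))) / (-1 + (-1 + 1/α)*z)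

theorem mprk22Stability_eq_neg_one {α z : ℝ} (hα : α ≠ 0)
    (hz : (6*α^2 - 7*α + 2) * z^2 + 2 * (2*α^2 - 3*α + 2) * z - 4*α = 0)
    (h₁ : -1 + α * z ≠ 0) (h₂ : -1 + (-1 + 1/α) * z ≠ 0) :
    mprk22Stability α z = -1 := by
  rw [mprk22Stability, div_eq_iff h₂]
  field_simp
  linear_combination (-α) * hz

theorem quadratic_eq_zero_of_eq_neg_sub_sqrt {a b c D z : ℝ} (ha : a ≠ 0)
    (hD : b^2 - a*c = D) (hD₀ : 0 ≤ D) (hz : z = (-b - √D) / a) :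
    a * z^2 + 2 * b * z + c = 0 := by
  have hs : √D ^ 2 = D := sq_sqrt hD₀
  subst hz
  field_simp
  linear_combination hs - hD

theorem neg_sub_sqrt_div_neg {a b D : ℝ} (ha : 0 < a) (hb : 0 < b) : (-b - √D) / a < 0 :=
  div_neg_of_neg_of_pos (by linarith [sqrt_nonneg D]) ha

theorem neg_one_add_mul_neg {c z : ℝ} (hc : 0 ≤ c) (hz : z < 0) : -1 + c * z < 0 := by
  nlinarith

theorem mprk22_pos_alpha_lt_half_conditional (α : ℝ) (hα₁ : 0 < α) (hα₂ : α < 1/2)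
    (R : ℝ → ℝ)
    (hR : ∀ z, R z = -(1 + (2 - 5/(2*α) + 1/α^2)*z - (3/(2*α) - 1/α^2) * (z/(-1 + α*z))) /
      (-1 + (-1 + 1/α)*z)) :
    let zstar := (-2*α^2 + 3*α - 2 - Real.sqrt (4*α^4 + 12*α^3 - 11*α^2 - 4*α + 4)) /
      (6*α^2 - 7*α + 2)
    zstar < 0 ∧ 1 ≤ |R zstar| ∧ R zstar = -1 := by
  intro zstar
  have ha : 0 < 6*α^2 - 7*α + 2 := by nlinarith
  have hb : 0 < 2*α^2 - 3*α + 2 := by nlinarith [sq_nonneg (α - 3/4)]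
  have hD : (2*α^2 - 3*α + 2)^2 - (6*α^2 - 7*α + 2) * (-4*α) =
      4*α^4 + 12*α^3 - 11*α^2 - 4*α + 4 := by ring
  have hzstar : zstar = (-(2*α^2 - 3*α + 2) - √(4*α^4 + 12*α^3 - 11*α^2 - 4*α + 4)) /
      (6*α^2 - 7*α + 2) := by ring
  have hneg : zstar < 0 := hzstar ▸ neg_sub_sqrt_div_neg ha hb
  have hroot := quadratic_eq_zero_of_eq_neg_sub_sqrt ha.ne' hD
    (by nlinarith [sq_nonneg (2*α^2 - 3*α + 2)]) hzstar
  have hinv : 0 ≤ -1 + 1/α := by rw [le_neg_add_iff_add_le, add_zero, le_div_iff₀ hα₁]; linarith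
  have hRz : R zstar = -1 := by
    rw [hR]
    exact mprk22Stability_eq_neg_one hα₁.ne' (by linear_combination hroot)
      (neg_one_add_mul_neg hα₁.le hneg).ne (neg_one_add_mul_neg hinv hneg).ne
  exact ⟨hneg, by rw [hRz, abs_neg, abs_one], hRz⟩
end

section
/- For α ≥ 1/2 and real z < 0, the stability function R(z) = (-z² - 2αz + 2)/(2(1 - αz)(1 - z)) satisfies -1 < R(z) < 1. -/
/-! Clearing the positive denominator `D = 2(1 - αz)(1 - z)`, both bounds become polynomial:
`N + D = (2α - 1)z² - 2(2α + 1)z + 4` and `D - N = (2α + 1)z² - 2z`, where `N` is the numerator,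
and for `α ≥ 1/2`, `z < 0` every term on the right is nonnegative with at least one positive. -/

theorem mprk22_R_bounds_neg_real (α : ℝ) (hα : 1/2 ≤ α) (z : ℝ) (hz : z < 0) :
    -1 < (-z^2 - 2*α*z + 2) / (2*(1 - α*z)*(1 - z)) ∧
    (-z^2 - 2*α*z + 2) / (2*(1 - α*z)*(1 - z)) < 1 := by
  have hαz : α * z < 0 := mul_neg_of_pos_of_neg (by linarith) hz
  have hD : 0 < 2*(1 - α*z)*(1 - z) := by
    have : 0 < 1 - α*z := by linarith
    have : 0 < 1 - z := by linarith
    positivity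
  have hz2 : 0 ≤ z^2 := sq_nonneg z
  constructor
  · rw [lt_div_iff₀ hD]
    have hsum : (-z^2 - 2*α*z + 2) + 2*(1 - α*z)*(1 - z)
        = (2*α - 1) * z^2 - 2*(2*α + 1) * z + 4 := by ring
    linarith [mul_nonneg (by linarith : (0:ℝ) ≤ 2*α - 1) hz2]
  · rw [div_lt_iff₀ hD]
    have hdiff : 2*(1 - α*z)*(1 - z) - (-z^2 - 2*α*z + 2) = (2*α + 1) * z^2 - 2*z := by ring
    linarith [mul_nonneg (by linarith : (0:ℝ) ≤ 2*α + 1) hz2]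
end
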